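/- arXiv:2405.13718 — 6 statements merged into one kernel-verified Lean document; each statement's English description precedes it below -/
import Mathlib

section
/- For distinct indices i_1,...,i_s and distinct nonnegative integer exponents k_1,...,k_s, the polynomials p_σ(a) = a_{i_1}^{k_{σ(1)}} ⋯ a_{i_s}^{k_{σ(s)}} in variables a ∈ ℝᵐ, indexed by permutations σ of [s], are pairwise distinct monomials; consequently the polynomial det([a_{i_r}^{k_t}]_{r,t∈[s]}) = ∑_σ sgn(σ) p_σ(a) is not identically zero. -/
open MvPolynomial

private lemma prod_pow_eq_monomial {m s : ℕ} (i : Fin s → Fin m) (e : Fin s → ℕ) :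
    (∏ r : Fin s, (X (i r) : MvPolynomial (Fin m) ℝ) ^ e r) =
      monomial (∑ r : Fin s, Finsupp.single (i r) (e r)) (1 : ℝ) := by
  induction s with
  | zero => simp [monomial_eq]
  | succ n ih =>
    rw [Fin.prod_univ_succ, Fin.sum_univ_succ, ih (fun r => i r.succ) (fun r => e r.succ),
      X_pow_eq_monomial, monomial_mul, one_mul]

private lemma exp_inj {m s : ℕ} (i : Fin s → Fin m) (hi : Function.Injective i)
    (k : Fin s → ℕ) (hk : Function.Injective k) :
    Function.Injective fun σ : Equiv.Perm (Fin s) =>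
      ∑ r : Fin s, Finsupp.single (i r) (k (σ r)) := by
  intro σ τ h
  apply Equiv.ext
  intro r
  apply hk
  have hσ : (∑ r' : Fin s, Finsupp.single (i r') (k (σ r'))) (i r) = k (σ r) := by
    rw [Finset.sum_apply']
    rw [Finset.sum_eq_single r] <;> simp +contextual [Finsupp.single_apply, hi.eq_iff]
  have hτ : (∑ r' : Fin s, Finsupp.single (i r') (k (τ r'))) (i r) = k (τ r) := by
    rw [Finset.sum_apply']
    rw [Finset.sum_eq_single r] <;> simp +contextual [Finsupp.single_apply, hi.eq_iff]
  rw [← hσ, ← hτ]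
  simp only at h
  rw [h]

/-- For distinct indices `i_1,…,i_s` and distinct nonnegative
integer exponents `k_1,…,k_s`, the monomials
`p_σ = a_{i_1}^{k_{σ(1)}} ⋯ a_{i_s}^{k_{σ(s)}}`, indexed by permutations `σ`,
are pairwise distinct; consequently the Leibniz expansion
`det([a_{i_r}^{k_t}]) = ∑_σ sgn(σ) p_σ` is a nonzero polynomial. -/
theorem stmt_10 {m s : ℕ} (i : Fin s → Fin m) (hi : Function.Injective i)
    (k : Fin s → ℕ) (hk : Function.Injective k) :
    (Function.Injective fun σ : Equiv.Perm (Fin s) =>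
      ∏ r : Fin s, (X (i r) : MvPolynomial (Fin m) ℝ) ^ k (σ r)) ∧
    (Matrix.of fun (r t : Fin s) => (X (i r) : MvPolynomial (Fin m) ℝ) ^ k t).det
      ≠ 0 := by
  have hexp := exp_inj i hi k hk
  constructor
  · intro σ τ h
    simp only [prod_pow_eq_monomial] at h
    exact hexp (monomial_left_injective (one_ne_zero) h)
  · intro h
    have hdet := Matrix.det_apply
      (Matrix.of fun (r t : Fin s) => (X (i r) : MvPolynomial (Fin m) ℝ) ^ k t)
    -- rewrite each term as a monomial
    have hterm : ∀ σ : Equiv.Perm (Fin s),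
        (∏ r : Fin s, (Matrix.of fun (r t : Fin s) =>
          (X (i r) : MvPolynomial (Fin m) ℝ) ^ k t) (σ r) r) =
        monomial (∑ r : Fin s, Finsupp.single (i r) (k (σ⁻¹ r))) (1 : ℝ) := by
      intro σ
      have : (∏ r : Fin s, (X (i (σ r)) : MvPolynomial (Fin m) ℝ) ^ k r) =
          ∏ r : Fin s, (X (i r) : MvPolynomial (Fin m) ℝ) ^ k (σ⁻¹ r) := by
        rw [← Equiv.prod_comp σ (fun r => (X (i r) : MvPolynomial (Fin m) ℝ) ^ k (σ⁻¹ r))]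
        simp
      simpa [this] using prod_pow_eq_monomial (fun r => i r) (fun r => k (σ⁻¹ r))
    have hc : coeff (∑ r : Fin s, Finsupp.single (i r) (k r))
        ((Matrix.of fun (r t : Fin s) =>
          (X (i r) : MvPolynomial (Fin m) ℝ) ^ k t).det) = 1 := by
      rw [hdet, coeff_sum]
      rw [Finset.sum_eq_single (1 : Equiv.Perm (Fin s))]
      · simp [hterm, coeff_monomial, prod_pow_eq_monomial]
      · intro σ _ hσ
        rw [hterm σ]
        have hne : (∑ r : Fin s, Finsupp.single (i r) (k (σ⁻¹ r))) ≠
            (∑ r : Fin s, Finsupp.single (i r) (k r)) := by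
          intro heq
          apply hσ
          have := hexp (a₁ := σ⁻¹) (a₂ := 1) (by simpa using heq)
          simp at this
          simp [← this]
        simp only [Equiv.Perm.inv_def] at hne
        simp [coeff_monomial, hne, coeff_smul]
      · simp
    rw [h] at hc
    simp at hc
end

section
/- Let ω, T ∈ ℕ and define f(z, u, α) = (∑_{t=1}^{τ} x_t exp(x_t x_τ)) / (∑_{t=1}^{τ} exp(x_t x_τ)) where α ∈ [ω]^τ for some 1 ≤ τ ≤ T, x_t = z_{α_t} + u_t, z ∈ ℝ^ω, u ∈ ℝ^T. Then for generic (z, u) ∈ ℝ^ω × ℝ^T, the map α ↦ f(z, u, α) is injective on ∪_{t=1}^T [ω]^t and never takes the value 0. -/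
open Real

/-- One-dimensional softmax self-attention: given scalar token embeddings `z`,
scalar positional embeddings `u`, and a nonempty token sequence `α`,
`attnF z u α = ⟨x, softmax (x * x_last)⟩` where `x_t = z_{α_t} + u_t`. -/
noncomputable def attnF {ω T : ℕ} (z : Fin ω → ℝ) (u : Fin T → ℝ)
    (α : List (Fin ω)) : ℝ :=
  if h : α.length = 0 then 0 else
    let x : Fin α.length → ℝ := fun t =>
      z (α.get t) + (if ht : (t : ℕ) < T then u ⟨t, ht⟩ else 0)
    let xl := x ⟨α.length - 1, Nat.sub_lt (Nat.pos_of_ne_zero h) one_pos⟩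
    (∑ t, x t * Real.exp (x t * xl)) / (∑ t, Real.exp (x t * xl))

open Filter in
lemma exists_M (a b c : ℝ) :
    ∃ M : ℝ, a ≤ M ∧ 1 ≤ M ∧ b * (c + M) * Real.exp (-M) < 1 := by
  have h1 : Tendsto (fun M : ℝ => b * c * Real.exp (-M)) atTop (nhds 0) := by
    simpa using (Real.tendsto_exp_neg_atTop_nhds_zero).const_mul (b * c)
  have h2 : Tendsto (fun M : ℝ => b * (M * Real.exp (-M))) atTop (nhds 0) := by
    have := (Real.tendsto_pow_mul_exp_neg_atTop_nhds_zero 1).const_mul b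
    simpa using this
  have h : Tendsto (fun M : ℝ => b * (c + M) * Real.exp (-M)) atTop (nhds 0) := by
    have := h1.add h2
    simp only [add_zero] at this
    refine this.congr fun M => by ring
  have hev : ∀ᶠ M : ℝ in atTop, b * (c + M) * Real.exp (-M) < 1 :=
    h.eventually_lt_const one_pos
  obtain ⟨M, hM⟩ := ((eventually_ge_atTop a).and ((eventually_ge_atTop 1).and hev)).exists
  exact ⟨M, hM.1, hM.2.1, hM.2.2⟩

lemma softmax_est {n : ℕ} (x : Fin n → ℝ) (l m : Fin n) (B Δ : ℝ)
    (hpos : ∀ t, 0 < x t) (hB : ∀ t, x t ≤ B)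
    (hgap : ∀ t, t ≠ m → x t ≤ x m - Δ) (hΔ : 0 ≤ Δ) (hl : 1 ≤ x l) :
    |(∑ t, x t * Real.exp (x t * x l)) / (∑ t, Real.exp (x t * x l)) - x m|
      ≤ n * B * Real.exp (-Δ) := by
  haveI : Nonempty (Fin n) := ⟨m⟩
  set w : Fin n → ℝ := fun t => Real.exp (x t * x l) with hw
  have hwpos : ∀ t, 0 < w t := fun t => Real.exp_pos _
  have hWpos : 0 < ∑ t, w t := Finset.sum_pos (fun t _ => hwpos t) Finset.univ_nonempty
  have hwmW : w m ≤ ∑ t, w t :=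
    Finset.single_le_sum (fun t _ => (hwpos t).le) (Finset.mem_univ m)
  have hBpos : 0 < B := lt_of_lt_of_le (hpos m) (hB m)
  have hxl0 : (0:ℝ) ≤ x l := le_trans zero_le_one hl
  have hsum : ∑ t, (x t - x m) * w t = (∑ t, x t * w t) - x m * ∑ t, w t := by
    rw [Finset.mul_sum, ← Finset.sum_sub_distrib]
    exact Finset.sum_congr rfl fun t _ => by ring
  have key : (∑ t, x t * w t) / (∑ t, w t) - x m
      = (∑ t, (x t - x m) * w t) / (∑ t, w t) := by
    rw [hsum]; field_simp
  have hterm : ∀ t, |x t - x m| * w t ≤ B * Real.exp (-Δ) * w m := by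
    intro t
    by_cases htm : t = m
    · subst htm; simp only [sub_self, abs_zero, zero_mul]; positivity
    · have h1 : |x t - x m| ≤ B := by
        rw [abs_sub_le_iff]
        constructor
        · linarith [hpos m, hB t]
        · linarith [hpos t, hB m]
      have h2 : w t ≤ Real.exp (-Δ) * w m := by
        have hxt : x t * x l ≤ (x m - Δ) * x l :=
          mul_le_mul_of_nonneg_right (hgap t htm) hxl0
        have e1 : Real.exp ((x m - Δ) * x l)
            = Real.exp (-(Δ * x l)) * Real.exp (x m * x l) := by
          rw [← Real.exp_add]; ring_nf
        calc w t ≤ Real.exp ((x m - Δ) * x l) := Real.exp_le_exp.mpr hxt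
          _ = Real.exp (-(Δ * x l)) * Real.exp (x m * x l) := e1
          _ ≤ Real.exp (-Δ) * w m := by
              apply mul_le_mul_of_nonneg_right _ (Real.exp_pos _).le
              apply Real.exp_le_exp.mpr
              nlinarith
      calc |x t - x m| * w t ≤ B * (Real.exp (-Δ) * w m) :=
            mul_le_mul h1 h2 (hwpos t).le hBpos.le
        _ = B * Real.exp (-Δ) * w m := (mul_assoc _ _ _).symm
  have habs : |∑ t, (x t - x m) * w t| ≤ n * (B * Real.exp (-Δ) * w m) := by
    calc |∑ t, (x t - x m) * w t| ≤ ∑ t, |(x t - x m) * w t| :=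
          Finset.abs_sum_le_sum_abs _ _
      _ = ∑ t, |x t - x m| * w t := by
          exact Finset.sum_congr rfl fun t _ => by
            rw [abs_mul, abs_of_pos (hwpos t)]
      _ ≤ ∑ _t : Fin n, B * Real.exp (-Δ) * w m :=
          Finset.sum_le_sum fun t _ => hterm t
      _ = n * (B * Real.exp (-Δ) * w m) := by
          rw [Finset.sum_const, Finset.card_univ, Fintype.card_fin, nsmul_eq_mul]
  rw [key, abs_div, abs_of_pos hWpos, div_le_iff₀ hWpos]
  calc |∑ t, (x t - x m) * w t| ≤ n * (B * Real.exp (-Δ) * w m) := habs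
    _ ≤ n * (B * Real.exp (-Δ) * ∑ t, w t) := by
        apply mul_le_mul_of_nonneg_left _ (by positivity)
        exact mul_le_mul_of_nonneg_left hwmW (by positivity)
    _ = n * B * Real.exp (-Δ) * ∑ t, w t := by ring

noncomputable def xv {ω T : ℕ} (z : Fin ω → ℝ) (u : Fin T → ℝ)
    (α : List (Fin ω)) (t : Fin α.length) : ℝ :=
  z (α.get t) + (if ht : (t : ℕ) < T then u ⟨t, ht⟩ else 0)

def lastIdx {ω : ℕ} (α : List (Fin ω)) (h : α.length ≠ 0) : Fin α.length :=
  ⟨α.length - 1, Nat.sub_lt (Nat.pos_of_ne_zero h) one_pos⟩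

lemma attnF_eq {ω T : ℕ} (z : Fin ω → ℝ) (u : Fin T → ℝ)
    (α : List (Fin ω)) (h : α.length ≠ 0) :
    attnF z u α = (∑ t, xv z u α t * Real.exp (xv z u α t * xv z u α (lastIdx α h)))
      / (∑ t, Real.exp (xv z u α t * xv z u α (lastIdx α h))) := by
  rw [attnF, dif_neg h]; rfl

lemma Fb_analytic {ω T : ℕ} (α : List (Fin ω)) (hne : α ≠ []) (hlen : α.length ≤ T) :
    AnalyticOnNhd ℝ (fun p : (Fin ω → ℝ) × (Fin T → ℝ) => attnF p.1 p.2 α) Set.univ := by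
  have h0 : α.length ≠ 0 := fun h => hne (List.length_eq_zero_iff.mp h)
  haveI : Nonempty (Fin α.length) := Fin.pos_iff_nonempty.mp (Nat.pos_of_ne_zero h0)
  have hx : ∀ t : Fin α.length,
      AnalyticOnNhd ℝ (fun p : (Fin ω → ℝ) × (Fin T → ℝ) => xv p.1 p.2 α t) Set.univ := by
    intro t
    have ht : (t : ℕ) < T := lt_of_lt_of_le t.isLt hlen
    have heq : (fun p : (Fin ω → ℝ) × (Fin T → ℝ) => xv p.1 p.2 α t)
        = fun p => p.1 (α.get t) + p.2 ⟨t, ht⟩ := by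
      funext p; simp [xv, dif_pos ht]
    rw [heq]
    have h1 : AnalyticOnNhd ℝ (fun p : (Fin ω → ℝ) × (Fin T → ℝ) => p.1 (α.get t))
        Set.univ :=
      (ContinuousLinearMap.comp
        (ContinuousLinearMap.proj (R := ℝ) (φ := fun _ : Fin ω => ℝ) (α.get t))
        (ContinuousLinearMap.fst ℝ (Fin ω → ℝ) (Fin T → ℝ))).analyticOnNhd Set.univ
    have h2 : AnalyticOnNhd ℝ (fun p : (Fin ω → ℝ) × (Fin T → ℝ) => p.2 ⟨t, ht⟩)
        Set.univ :=
      (ContinuousLinearMap.comp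
        (ContinuousLinearMap.proj (R := ℝ) (φ := fun _ : Fin T => ℝ) (⟨t, ht⟩ : Fin T))
        (ContinuousLinearMap.snd ℝ (Fin ω → ℝ) (Fin T → ℝ))).analyticOnNhd Set.univ
    exact h1.add h2
  have key : (fun p : (Fin ω → ℝ) × (Fin T → ℝ) => attnF p.1 p.2 α)
      = fun p => (∑ t, xv p.1 p.2 α t *
            Real.exp (xv p.1 p.2 α t * xv p.1 p.2 α (lastIdx α h0)))
          / (∑ t, Real.exp (xv p.1 p.2 α t * xv p.1 p.2 α (lastIdx α h0))) := by
    funext p; exact attnF_eq _ _ _ h0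
  rw [key]
  apply AnalyticOnNhd.div
  · exact Finset.analyticOnNhd_fun_sum _ fun t _ =>
      (hx t).mul ((hx t).mul (hx (lastIdx α h0))).rexp
  · exact Finset.analyticOnNhd_fun_sum _ fun t _ => ((hx t).mul (hx (lastIdx α h0))).rexp
  · intro p _
    exact (Finset.sum_pos (fun t _ => Real.exp_pos _) Finset.univ_nonempty).ne'

-- point 1
lemma case1_est {ω T : ℕ} (α : List (Fin ω)) (hne : α ≠ []) (hlen : α.length ≤ T)
    (M : ℝ) (hM : 1 ≤ M) :
    |attnF (0 : Fin ω → ℝ) (fun t : Fin T => ((t : ℕ) + 1) * M) α - α.length * M|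
      ≤ T * (T * M) * Real.exp (-M) := by
  have h0 : α.length ≠ 0 := fun h => hne (List.length_eq_zero_iff.mp h)
  have hM0 : (0:ℝ) < M := lt_of_lt_of_le one_pos hM
  have hlpos : 0 < α.length := Nat.pos_of_ne_zero h0
  set u : Fin T → ℝ := fun t => ((t : ℕ) + 1) * M with hu
  have hxv : ∀ t : Fin α.length, xv (0 : Fin ω → ℝ) u α t = ((t : ℕ) + 1) * M := by
    intro t
    have ht : (t : ℕ) < T := lt_of_lt_of_le t.isLt hlen
    simp [xv, hu, dif_pos ht]
  have hxm : xv (0 : Fin ω → ℝ) u α (lastIdx α h0) = α.length * M := by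
    rw [hxv]
    have : ((lastIdx α h0 : ℕ) : ℝ) = (α.length : ℝ) - 1 := by
      have hv : (lastIdx α h0 : ℕ) = α.length - 1 := rfl
      rw [hv, Nat.cast_sub hlpos, Nat.cast_one]
    rw [this]; ring
  have est := softmax_est (xv (0 : Fin ω → ℝ) u α) (lastIdx α h0)
      (lastIdx α h0) (T * M) M
    (fun t => by rw [hxv]; positivity)
    (fun t => by
      rw [hxv]
      have h1 : (t : ℕ) + 1 ≤ T := le_trans t.isLt hlen
      have : ((t : ℕ) : ℝ) + 1 ≤ (T : ℝ) := by exact_mod_cast h1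
      nlinarith)
    (fun t ht => by
      rw [hxv, hxm]
      have htv : (t : ℕ) ≠ α.length - 1 := fun h => ht (Fin.ext h)
      have h1 : (t : ℕ) + 1 ≤ α.length - 1 := by omega
      have h2 : ((t : ℕ) : ℝ) + 1 ≤ (α.length : ℝ) - 1 := by
        have := (Nat.cast_le (α := ℝ)).mpr h1
        push_cast [Nat.cast_sub hlpos] at this
        linarith
      nlinarith)
    hM0.le
    (by
      rw [hxm]
      nlinarith [(Nat.one_le_cast (α := ℝ)).mpr hlpos])
  rw [attnF_eq _ _ _ h0, ← hxm]
  refine le_trans est ?_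
  have hT : (α.length : ℝ) ≤ T := Nat.cast_le.mpr hlen
  have h2 : (0:ℝ) ≤ T * M := by positivity
  exact mul_le_mul_of_nonneg_right (mul_le_mul_of_nonneg_right hT h2) (Real.exp_pos (-M)).le

lemma case2_est {ω T : ℕ} (α : List (Fin ω)) (hne : α ≠ []) (hlen : α.length ≤ T)
    (s : ℕ) (hs : s < α.length) (M : ℝ) (hM : (ω : ℝ) ≤ M) (hM1 : 1 ≤ M) :
    |attnF (fun j : Fin ω => (j : ℕ) + 1)
        (fun t : Fin T => if (t : ℕ) = s then M else 0) α
      - (((α.get ⟨s, hs⟩ : ℕ) : ℝ) + 1 + M)|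
      ≤ T * ((ω : ℝ) + 1 + M) * Real.exp (-(M + 1 - ω)) := by
  have h0 : α.length ≠ 0 := fun h => hne (List.length_eq_zero_iff.mp h)
  have hM0 : (0:ℝ) < M := lt_of_lt_of_le one_pos hM1
  set z : Fin ω → ℝ := fun j => (j : ℕ) + 1 with hz
  set u : Fin T → ℝ := fun t => if (t : ℕ) = s then M else 0 with hu
  set m : Fin α.length := ⟨s, hs⟩ with hm
  have hxv : ∀ t : Fin α.length,
      xv z u α t = ((α.get t : ℕ) : ℝ) + 1 + (if (t : ℕ) = s then M else 0) := by
    intro t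
    have ht : (t : ℕ) < T := lt_of_lt_of_le t.isLt hlen
    simp [xv, hz, hu, dif_pos ht]
  have hget : ∀ t : Fin α.length, ((α.get t : ℕ) : ℝ) + 1 ≤ (ω : ℝ) := by
    intro t
    have : (α.get t : ℕ) + 1 ≤ ω := (α.get t).isLt
    exact_mod_cast this
  have hxm : xv z u α m = ((α.get ⟨s, hs⟩ : ℕ) : ℝ) + 1 + M := by
    rw [hxv]; simp [hm]
  have est := softmax_est (xv z u α) (lastIdx α h0) m ((ω : ℝ) + 1 + M) (M + 1 - ω)
    (fun t => by rw [hxv]; split <;> positivity)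
    (fun t => by
      rw [hxv]
      have := hget t
      split <;> nlinarith)
    (fun t ht => by
      rw [hxv, hxm]
      have hts : (t : ℕ) ≠ s := fun h => ht (by rw [hm]; exact Fin.ext h)
      rw [if_neg hts]
      have h1 := hget t
      have h2 : (0:ℝ) ≤ ((α.get ⟨s, hs⟩ : ℕ) : ℝ) := by positivity
      linarith)
    (by linarith)
    (by
      rw [hxv]
      have : (0:ℝ) ≤ ((α.get (lastIdx α h0) : ℕ) : ℝ) := by positivity
      split <;> linarith)
  rw [attnF_eq _ _ _ h0, ← hxm]
  refine le_trans est ?_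
  have hT : (α.length : ℝ) ≤ T := Nat.cast_le.mpr hlen
  have h2 : (0:ℝ) ≤ (ω : ℝ) + 1 + M := by positivity
  exact mul_le_mul_of_nonneg_right (mul_le_mul_of_nonneg_right hT h2)
    (Real.exp_pos _).le

lemma nat_abs_ge_one {a b : ℕ} (h : a ≠ b) : (1:ℝ) ≤ |(a:ℝ) - (b:ℝ)| := by
  have h1 : (1:ℤ) ≤ |(a:ℤ) - (b:ℤ)| := by
    exact Int.one_le_abs (by omega)
  have h2 := (@Int.cast_le ℝ _ _ _).mpr h1
  push_cast at h2
  convert h2 using 2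

lemma witness_ne_zero {ω T : ℕ} (α : List (Fin ω)) (hne : α ≠ []) (hlen : α.length ≤ T) :
    ∃ p : (Fin ω → ℝ) × (Fin T → ℝ), attnF p.1 p.2 α ≠ 0 := by
  obtain ⟨M, -, hM1, hb⟩ := exists_M 1 (2 * (T:ℝ)^2) 0
  refine ⟨(0, fun t : Fin T => ((t : ℕ) + 1) * M), fun h => ?_⟩
  have est := case1_est α hne hlen M hM1
  rw [h] at est
  have hlen1 : (1:ℝ) ≤ α.length := by
    have : 1 ≤ α.length := Nat.pos_of_ne_zero (fun h' => hne (List.length_eq_zero_iff.mp h'))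
    exact_mod_cast this
  have h2 : |(0:ℝ) - α.length * M| = α.length * M := by
    rw [abs_sub_comm, sub_zero, abs_of_nonneg]; nlinarith
  rw [h2] at est
  have hexp : (0:ℝ) < Real.exp (-M) := Real.exp_pos _
  have hT : (0:ℝ) ≤ (T:ℝ) := Nat.cast_nonneg _
  nlinarith

lemma witness_sep_diff_len {ω T : ℕ} (α β : List (Fin ω))
    (hneα : α ≠ []) (hlenα : α.length ≤ T) (hneβ : β ≠ []) (hlenβ : β.length ≤ T)
    (h : α.length ≠ β.length) :
    ∃ p : (Fin ω → ℝ) × (Fin T → ℝ), attnF p.1 p.2 α ≠ attnF p.1 p.2 β := by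
  obtain ⟨M, -, hM1, hb⟩ := exists_M 1 (2 * (T:ℝ)^2) 0
  refine ⟨(0, fun t : Fin T => ((t : ℕ) + 1) * M), fun heq => ?_⟩
  have e1 := case1_est α hneα hlenα M hM1
  have e2 := case1_est β hneβ hlenβ M hM1
  rw [heq] at e1
  set f := attnF (0 : Fin ω → ℝ) (fun t : Fin T => ((t : ℕ) + 1) * M) β
  have tri : |(α.length : ℝ) * M - β.length * M| ≤ |f - α.length * M| + |f - β.length * M| := by
    rw [abs_sub_comm f (α.length * M)]
    exact abs_sub_le _ _ _
  have habs : (1:ℝ) * M ≤ |(α.length : ℝ) * M - β.length * M| := by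
    have h1 : (1:ℝ) ≤ |(α.length : ℝ) - β.length| := nat_abs_ge_one h
    have : |(α.length : ℝ) * M - β.length * M| = |(α.length : ℝ) - β.length| * M := by
      rw [← sub_mul, abs_mul, abs_of_nonneg (by linarith : (0:ℝ) ≤ M)]
    rw [this]
    nlinarith
  have hexp : (0:ℝ) < Real.exp (-M) := Real.exp_pos _
  nlinarith

lemma exists_diff_get {ω : ℕ} (α β : List (Fin ω)) (hlen : α.length = β.length)
    (h : α ≠ β) : ∃ (s : ℕ) (hα : s < α.length) (hβ : s < β.length),
      α.get ⟨s, hα⟩ ≠ β.get ⟨s, hβ⟩ := by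
  by_contra hc
  push_neg at hc
  exact h (List.ext_get hlen fun n h1 h2 => hc n h1 h2)

lemma witness_sep_same_len {ω T : ℕ} (α β : List (Fin ω))
    (hneα : α ≠ []) (hlenα : α.length ≤ T) (hneβ : β ≠ []) (hlenβ : β.length ≤ T)
    (hlen : α.length = β.length) (h : α ≠ β) :
    ∃ p : (Fin ω → ℝ) × (Fin T → ℝ), attnF p.1 p.2 α ≠ attnF p.1 p.2 β := by
  obtain ⟨s, hsα, hsβ, hsne⟩ := exists_diff_get α β hlen h
  obtain ⟨M, hMω, hM1, hb⟩ := exists_M (ω : ℝ) (2 * (T:ℝ) * Real.exp ((ω:ℝ) - 1)) ((ω:ℝ) + 1)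
  refine ⟨((fun j : Fin ω => (j : ℕ) + 1), fun t : Fin T => if (t : ℕ) = s then M else 0),
    fun heq => ?_⟩
  have e1 := case2_est α hneα hlenα s hsα M hMω hM1
  have e2 := case2_est β hneβ hlenβ s hsβ M hMω hM1
  rw [heq] at e1
  set f := attnF (fun j : Fin ω => (j : ℕ) + 1)
    (fun t : Fin T => if (t : ℕ) = s then M else 0) β
  set a : ℝ := ((α.get ⟨s, hsα⟩ : ℕ) : ℝ)
  set b : ℝ := ((β.get ⟨s, hsβ⟩ : ℕ) : ℝ)
  have tri : |(a + 1 + M) - (b + 1 + M)| ≤ |f - (a + 1 + M)| + |f - (b + 1 + M)| := by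
    rw [abs_sub_comm f (a + 1 + M)]
    exact abs_sub_le _ _ _
  have habs : (1:ℝ) ≤ |(a + 1 + M) - (b + 1 + M)| := by
    have : (a + 1 + M) - (b + 1 + M) = a - b := by ring
    rw [this]
    exact nat_abs_ge_one (fun hv => hsne (Fin.ext hv))
  have hrw : Real.exp (-(M + 1 - ω)) = Real.exp ((ω:ℝ) - 1) * Real.exp (-M) := by
    rw [← Real.exp_add]; ring_nf
  rw [hrw] at e1 e2
  nlinarith

/-- For generic `(z, u) ∈ ℝ^ω × ℝ^T` (outside the zero set of a
nontrivial real analytic function), the one-dimensional softmax self-attention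
map `α ↦ attnF z u α` is injective on nonempty sequences of length at most `T`
and never takes the value `0`. -/
theorem stmt_12 (ω T : ℕ) :
    ∃ g : (Fin ω → ℝ) × (Fin T → ℝ) → ℝ,
      AnalyticOn ℝ g Set.univ ∧ g ≠ 0 ∧
      ∀ (z : Fin ω → ℝ) (u : Fin T → ℝ), g (z, u) ≠ 0 →
        Set.InjOn (attnF z u) {α : List (Fin ω) | α ≠ [] ∧ α.length ≤ T} ∧
        ∀ α : List (Fin ω), α ≠ [] → α.length ≤ T → attnF z u α ≠ 0 := by
  classical
  have hfin : {α : List (Fin ω) | α ≠ [] ∧ α.length ≤ T}.Finite :=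
    (List.finite_length_le (Fin ω) T).subset fun α hα => hα.2
  set A : Finset (List (Fin ω)) := hfin.toFinset with hA
  have hmemA : ∀ {α}, α ∈ A ↔ (α ≠ [] ∧ α.length ≤ T) := fun {α} => hfin.mem_toFinset
  set Pr : Finset (List (Fin ω) × List (Fin ω)) :=
    (A ×ˢ A).filter (fun q => q.1 ≠ q.2) with hPr
  have hmemPr : ∀ {q : List (Fin ω) × List (Fin ω)},
      q ∈ Pr ↔ (q.1 ∈ A ∧ q.2 ∈ A ∧ q.1 ≠ q.2) := by
    intro q
    simp [hPr, Finset.mem_filter, Finset.mem_product, and_assoc]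
  set Fb : List (Fin ω) → ((Fin ω → ℝ) × (Fin T → ℝ)) → ℝ :=
    fun α p => attnF p.1 p.2 α with hFb
  have hFba : ∀ α ∈ A, AnalyticOnNhd ℝ (Fb α) Set.univ := fun α hα =>
    Fb_analytic α (hmemA.mp hα).1 (hmemA.mp hα).2
  refine ⟨fun p => (∏ α ∈ A, Fb α p) * ∏ q ∈ Pr, (Fb q.1 p - Fb q.2 p), ?_, ?_, ?_⟩
  · -- analyticity
    refine AnalyticOnNhd.analyticOn ?_
    refine AnalyticOnNhd.mul (Finset.analyticOnNhd_fun_prod A hFba) ?_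
    refine Finset.analyticOnNhd_fun_prod Pr fun q hq => ?_
    obtain ⟨h1, h2, -⟩ := hmemPr.mp hq
    exact (hFba q.1 h1).sub (hFba q.2 h2)
  · -- g ≠ 0
    intro hg0
    have hg0' : ∀ p, (∏ α ∈ A, Fb α p) * ∏ q ∈ Pr, (Fb q.1 p - Fb q.2 p) = 0 :=
      fun p => congrFun hg0 p
    let ι := {a // a ∈ A} ⊕ {q // q ∈ Pr}
    let h : ι → ((Fin ω → ℝ) × (Fin T → ℝ)) → ℝ :=
      Sum.elim (fun a => Fb a.1) (fun q => fun p => Fb q.1.1 p - Fb q.1.2 p)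
    have hanal : ∀ i, AnalyticOnNhd ℝ (h i) Set.univ := by
      rintro (a | q)
      · exact hFba a.1 a.2
      · obtain ⟨h1, h2, -⟩ := hmemPr.mp q.2
        exact (hFba _ h1).sub (hFba _ h2)
    have hclosed : ∀ i, IsClosed {p : (Fin ω → ℝ) × (Fin T → ℝ) | h i p = 0} := by
      intro i
      have hc : Continuous (h i) := by
        rw [← continuousOn_univ]
        exact (hanal i).continuousOn
      exact isClosed_eq hc continuous_const
    have hcover : (⋃ i, {p : (Fin ω → ℝ) × (Fin T → ℝ) | h i p = 0}) = Set.univ := by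
      ext p
      simp only [Set.mem_iUnion, Set.mem_setOf_eq, Set.mem_univ, iff_true]
      rcases mul_eq_zero.mp (hg0' p) with hz | hz
      · obtain ⟨α, hα, hv⟩ := Finset.prod_eq_zero_iff.mp hz
        exact ⟨Sum.inl ⟨α, hα⟩, hv⟩
      · obtain ⟨q, hq, hv⟩ := Finset.prod_eq_zero_iff.mp hz
        exact ⟨Sum.inr ⟨q, hq⟩, hv⟩
    obtain ⟨i, hi⟩ := nonempty_interior_of_iUnion_of_closed hclosed hcover
    obtain ⟨p₀, hp₀⟩ := hi
    have hev : h i =ᶠ[nhds p₀] 0 := by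
      filter_upwards [isOpen_interior.mem_nhds hp₀] with x hx
      have hx' : x ∈ {p : (Fin ω → ℝ) × (Fin T → ℝ) | h i p = 0} := interior_subset hx
      exact hx'
    have hzero := (hanal i).eqOn_zero_of_preconnected_of_eventuallyEq_zero
      isPreconnected_univ (Set.mem_univ p₀) hev
    cases i with
    | inl a =>
      obtain ⟨ha1, ha2⟩ := hmemA.mp a.2
      obtain ⟨p, hp⟩ := witness_ne_zero (T := T) a.1 ha1 ha2
      exact hp (hzero (Set.mem_univ p))
    | inr q =>
      obtain ⟨h1, h2, h3⟩ := hmemPr.mp q.2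
      obtain ⟨ha1, ha2⟩ := hmemA.mp h1
      obtain ⟨hb1, hb2⟩ := hmemA.mp h2
      have : ∃ p : (Fin ω → ℝ) × (Fin T → ℝ),
          attnF p.1 p.2 q.1.1 ≠ attnF p.1 p.2 q.1.2 := by
        by_cases hl : q.1.1.length = q.1.2.length
        · exact witness_sep_same_len _ _ ha1 ha2 hb1 hb2 hl h3
        · exact witness_sep_diff_len _ _ ha1 ha2 hb1 hb2 hl
      obtain ⟨p, hp⟩ := this
      exact hp (sub_eq_zero.mp (hzero (Set.mem_univ p)))
  · -- main property
    intro z u hg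
    have hg1 : ∏ α ∈ A, Fb α (z, u) ≠ 0 := left_ne_zero_of_mul hg
    have hg2 : ∏ q ∈ Pr, (Fb q.1 (z, u) - Fb q.2 (z, u)) ≠ 0 := right_ne_zero_of_mul hg
    constructor
    · intro α hα β hβ heq
      by_contra hne
      have hq : (α, β) ∈ Pr := hmemPr.mpr ⟨hmemA.mpr hα, hmemA.mpr hβ, hne⟩
      refine hg2 (Finset.prod_eq_zero hq ?_)
      exact sub_eq_zero.mpr heq
    · intro α h1 h2 h0
      exact hg1 (Finset.prod_eq_zero (hmemA.mpr ⟨h1, h2⟩) h0)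
end

section
/- Suppose α ∈ [ω]^τ₁ and β ∈ [ω]^τ₂ satisfy, for z = 0 and u = (1, 2, ..., T), the identity (∑_{t=1}^{τ₁} t e^{t τ₁})(∑_{t=1}^{τ₂} e^{t τ₂}) = (∑_{t=1}^{τ₂} t e^{t τ₂})(∑_{t=1}^{τ₁} e^{t τ₁}). Then τ₁ = τ₂. (The proof regards both sides as values at x = e of integer-coefficient polynomials, uses the transcendence of e to conclude the polynomials are equal, and compares the coefficient of x^{τ₁² + τ₂²}, which is τ₁ − τ₂.) -/
open Finset Real

lemma nat_sq_lt (n : ℕ) : n ^ 2 < 2 ^ (n + 1) := by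
  induction n with
  | zero => norm_num
  | succ k ih =>
    have h1 : k < 2 ^ k := Nat.lt_two_pow_self (n := k)
    have e1 : 2 ^ (k + 2) = 4 * 2 ^ k := by ring
    have e2 : 2 ^ (k + 1) = 2 * 2 ^ k := by ring
    nlinarith [ih, h1]

lemma S_pos (τ : ℕ) (hτ : 1 ≤ τ) :
    0 < ∑ t ∈ Finset.Icc 1 τ, Real.exp ((t * τ : ℕ) : ℝ) :=
  Finset.sum_pos (fun t _ => Real.exp_pos _) ⟨1, by simp [hτ]⟩

lemma N_le (τ : ℕ) :
    (∑ t ∈ Finset.Icc 1 τ, (t : ℝ) * Real.exp ((t * τ : ℕ) : ℝ))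
      ≤ (τ : ℝ) * ∑ t ∈ Finset.Icc 1 τ, Real.exp ((t * τ : ℕ) : ℝ) := by
  rw [Finset.mul_sum]
  refine Finset.sum_le_sum fun t ht => ?_
  have ht' : t ≤ τ := (Finset.mem_Icc.mp ht).2
  exact mul_le_mul_of_nonneg_right (by exact_mod_cast ht') (Real.exp_pos _).le

lemma N_gt (τ : ℕ) (hτ : 1 ≤ τ) :
    ((τ : ℝ) - 1) * (∑ t ∈ Finset.Icc 1 τ, Real.exp ((t * τ : ℕ) : ℝ))
      < ∑ t ∈ Finset.Icc 1 τ, (t : ℝ) * Real.exp ((t * τ : ℕ) : ℝ) := by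
  obtain ⟨n, rfl⟩ : ∃ n, τ = n + 1 := ⟨τ - 1, by omega⟩
  have hcast : ((n + 1 : ℕ) : ℝ) - 1 = (n : ℝ) := by push_cast; ring
  rw [hcast, Finset.mul_sum, ← sub_pos, ← Finset.sum_sub_distrib]
  set f : ℕ → ℝ := fun t =>
    (t : ℝ) * Real.exp ((t * (n + 1) : ℕ) : ℝ) - (n : ℝ) * Real.exp ((t * (n + 1) : ℕ) : ℝ)
    with hf
  rw [Finset.sum_Icc_succ_top (by omega : 1 ≤ n + 1) f]
  -- lower bound for the partial sum
  have hlow : ∀ t ∈ Finset.Icc 1 n,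
      -((n : ℝ) * Real.exp ((n * (n + 1) : ℕ) : ℝ)) ≤ f t := by
    intro t ht
    obtain ⟨ht1, ht2⟩ := Finset.mem_Icc.mp ht
    have hE : Real.exp ((t * (n + 1) : ℕ) : ℝ) ≤ Real.exp ((n * (n + 1) : ℕ) : ℝ) := by
      apply Real.exp_le_exp.mpr
      exact_mod_cast Nat.mul_le_mul_right _ ht2
    have hEpos : 0 < Real.exp ((t * (n + 1) : ℕ) : ℝ) := Real.exp_pos _
    have htn : (t : ℝ) ≤ (n : ℝ) := by exact_mod_cast ht2
    have hn0 : (0 : ℝ) ≤ n := Nat.cast_nonneg n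
    simp only [hf]
    nlinarith
  have hsum : (Finset.Icc 1 n).card • (-((n : ℝ) * Real.exp ((n * (n + 1) : ℕ) : ℝ)))
      ≤ ∑ t ∈ Finset.Icc 1 n, f t := Finset.card_nsmul_le_sum _ _ _ hlow
  rw [Nat.card_Icc] at hsum
  simp only [Nat.add_sub_cancel, nsmul_eq_mul] at hsum
  -- top term
  have htop : f (n + 1) = Real.exp (((n + 1) * (n + 1) : ℕ) : ℝ) := by
    simp only [hf]; push_cast; ring
  rw [htop]
  -- key: n^2 < exp (n+1)
  have hkey : (n : ℝ) ^ 2 < Real.exp (n + 1) := by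
    have h2 : (2 : ℝ) ≤ Real.exp 1 := by
      have := Real.add_one_le_exp (1 : ℝ); linarith
    have hp : ((2 : ℝ)) ^ (n + 1) ≤ Real.exp 1 ^ (n + 1) :=
      pow_le_pow_left₀ (by norm_num) h2 (n + 1)
    have he : Real.exp 1 ^ (n + 1) = Real.exp ((n : ℝ) + 1) := by
      rw [← Real.exp_nat_mul]; norm_num
    have hn : (n : ℝ) ^ 2 < (2 : ℝ) ^ (n + 1) := by
      exact_mod_cast nat_sq_lt n
    linarith [hn, hp, he ▸ hp]
  have hexp : Real.exp (((n + 1) * (n + 1) : ℕ) : ℝ)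
      = Real.exp ((n * (n + 1) : ℕ) : ℝ) * Real.exp ((n : ℝ) + 1) := by
    rw [← Real.exp_add]; push_cast; ring_nf
  have hEpos : 0 < Real.exp ((n * (n + 1) : ℕ) : ℝ) := Real.exp_pos _
  nlinarith [hsum, hkey, hexp, hEpos]

/-- If positive integers `τ₁, τ₂ ≤ T` satisfy
`(∑_{t=1}^{τ₁} t e^{tτ₁})(∑_{t=1}^{τ₂} e^{tτ₂}) = (∑_{t=1}^{τ₂} t e^{tτ₂})(∑_{t=1}^{τ₁} e^{tτ₁})`,
then `τ₁ = τ₂` (by transcendence of `e`, comparing coefficients of the associated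
integer polynomials). -/
theorem stmt_13 (T τ₁ τ₂ : ℕ) (h₁ : 1 ≤ τ₁) (h₂ : 1 ≤ τ₂)
    (hT₁ : τ₁ ≤ T) (hT₂ : τ₂ ≤ T)
    (h : (∑ t ∈ Finset.Icc 1 τ₁, (t : ℝ) * Real.exp ((t * τ₁ : ℕ) : ℝ)) *
          (∑ t ∈ Finset.Icc 1 τ₂, Real.exp ((t * τ₂ : ℕ) : ℝ))
        = (∑ t ∈ Finset.Icc 1 τ₂, (t : ℝ) * Real.exp ((t * τ₂ : ℕ) : ℝ)) *
          (∑ t ∈ Finset.Icc 1 τ₁, Real.exp ((t * τ₁ : ℕ) : ℝ))) :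
    τ₁ = τ₂ := by
  by_contra hne
  have key : ∀ a b : ℕ, 1 ≤ a → a < b →
      (∑ t ∈ Finset.Icc 1 a, (t : ℝ) * Real.exp ((t * a : ℕ) : ℝ)) *
        (∑ t ∈ Finset.Icc 1 b, Real.exp ((t * b : ℕ) : ℝ))
      ≠ (∑ t ∈ Finset.Icc 1 b, (t : ℝ) * Real.exp ((t * b : ℕ) : ℝ)) *
        (∑ t ∈ Finset.Icc 1 a, Real.exp ((t * a : ℕ) : ℝ)) := by
    intro a b ha hab heq
    have hb : 1 ≤ b := by omega
    have hSa := S_pos a ha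
    have hSb := S_pos b hb
    have hNa := N_le a
    have hNb := N_gt b hb
    have hle : (a : ℝ) ≤ (b : ℝ) - 1 := by
      have : (a : ℝ) + 1 ≤ b := by exact_mod_cast hab
      linarith
    have p1 := mul_lt_mul_of_pos_right hNb hSa
    have p2 := mul_le_mul_of_nonneg_right hNa hSb.le
    have p3 := mul_le_mul_of_nonneg_right hle (mul_pos hSb hSa).le
    nlinarith [heq, p1, p2, p3]
  rcases Nat.lt_or_ge τ₁ τ₂ with hlt | hge
  · exact key τ₁ τ₂ h₁ hlt h
  · exact key τ₂ τ₁ h₂ (by omega) h.symm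
end

section
/- Let ω, T ∈ ℕ and define f(z, u, α) = ∑_{t=1}^{|α|} u_t z_{α_t} for z ∈ ℝ^ω, u ∈ ℝ^T, and α ∈ ∪_{t=1}^T [ω]^t. Then for generic (z, u) ∈ ℝ^ω × ℝ^T, the map α ↦ f(z, u, α) is injective on ∪_{t=1}^T [ω]^t and never takes the value 0. -/
/-- Token-averaging: `tokAvg z u α = ∑_{t=1}^{|α|} u_t z_{α_t}` with scalar token
embeddings `z ∈ ℝ^ω` and weights `u ∈ ℝ^T`. -/
def tokAvg {ω T : ℕ} (z : Fin ω → ℝ) (u : Fin T → ℝ) (α : List (Fin ω)) : ℝ :=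
  ∑ t : Fin α.length, (if ht : (t : ℕ) < T then u ⟨t, ht⟩ else 0) * z (α.get t)

open MvPolynomial

/-- The polynomial version of `tokAvg`. -/
noncomputable def tokP (ω T : ℕ) (α : List (Fin ω)) : MvPolynomial (Fin ω ⊕ Fin T) ℝ :=
  ∑ t : Fin α.length,
    (if ht : (t : ℕ) < T then X (Sum.inr (⟨t, ht⟩ : Fin T)) else 0) * X (Sum.inl (α.get t))

lemma eval_tokP (ω T : ℕ) (z : Fin ω → ℝ) (u : Fin T → ℝ) (α : List (Fin ω)) :
    MvPolynomial.eval (Sum.elim z u) (tokP ω T α) = tokAvg z u α := by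
  simp only [tokP, tokAvg, map_sum]
  refine Finset.sum_congr rfl fun t _ => ?_
  split_ifs with ht <;> simp

lemma tokAvg_ones (ω T : ℕ) (α : List (Fin ω)) (h : α.length ≤ T) :
    tokAvg (fun _ => (1 : ℝ)) (fun _ : Fin T => (1 : ℝ)) α = α.length := by
  unfold tokAvg
  have hterm : ∀ t ∈ (Finset.univ : Finset (Fin α.length)),
      (if ht : (t : ℕ) < T then (fun _ : Fin T => (1 : ℝ)) ⟨t, ht⟩ else 0)
        * (fun _ : Fin ω => (1 : ℝ)) (α.get t) = 1 := by
    intro t _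
    rw [dif_pos (lt_of_lt_of_le t.isLt h)]
    ring
  rw [Finset.sum_congr rfl hterm]
  simp

lemma tokAvg_indicator (ω T : ℕ) (s : ℕ) (hsT : s < T) (α : List (Fin ω))
    (hs : s < α.length) :
    tokAvg (fun i : Fin ω => (i : ℝ)) (fun t : Fin T => if (t : ℕ) = s then (1 : ℝ) else 0) α
      = ((α.get ⟨s, hs⟩ : Fin ω) : ℝ) := by
  unfold tokAvg
  rw [Finset.sum_eq_single (⟨s, hs⟩ : Fin α.length)]
  · rw [dif_pos hsT]
    simp
  · intro t _ ht
    split_ifs with h1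
    · have hc : ¬ (((⟨(t : ℕ), h1⟩ : Fin T) : ℕ) = s) := fun hc => ht (Fin.ext hc)
      simp only [hc, if_false, zero_mul]
    · rw [zero_mul]
  · simp

lemma tokP_ne_zero (ω T : ℕ) (α : List (Fin ω)) (hne : α ≠ []) (hlen : α.length ≤ T) :
    tokP ω T α ≠ 0 := by
  intro h
  have h2 := congrArg (MvPolynomial.eval
    (Sum.elim (fun _ : Fin ω => (1 : ℝ)) (fun _ : Fin T => (1 : ℝ)))) h
  rw [eval_tokP, tokAvg_ones ω T α hlen, map_zero] at h2
  have : α.length = 0 := by exact_mod_cast h2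
  exact hne (List.length_eq_zero_iff.mp this)

lemma tokP_ne (ω T : ℕ) {α β : List (Fin ω)}
    (hαl : α.length ≤ T) (hβl : β.length ≤ T) (hne : α ≠ β) :
    tokP ω T α ≠ tokP ω T β := by
  intro h
  by_cases hlen : α.length = β.length
  · -- find a differing index
    have hdiff : ∃ s : ℕ, ∃ hsα : s < α.length, ∃ hsβ : s < β.length,
        α.get ⟨s, hsα⟩ ≠ β.get ⟨s, hsβ⟩ := by
      by_contra hc
      push_neg at hc
      exact hne (List.ext_get hlen (fun n h1 h2 => hc n h1 h2))
    obtain ⟨s, hsα, hsβ, hsne⟩ := hdiff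
    have hsT : s < T := lt_of_lt_of_le hsα hαl
    have h2 := congrArg (MvPolynomial.eval
      (Sum.elim (fun i : Fin ω => (i : ℝ))
        (fun t : Fin T => if (t : ℕ) = s then (1 : ℝ) else 0))) h
    rw [eval_tokP, eval_tokP, tokAvg_indicator ω T s hsT α hsα,
      tokAvg_indicator ω T s hsT β hsβ] at h2
    have : ((α.get ⟨s, hsα⟩ : Fin ω) : ℕ) = ((β.get ⟨s, hsβ⟩ : Fin ω) : ℕ) := by
      exact_mod_cast h2
    exact hsne (Fin.ext this)
  · have h2 := congrArg (MvPolynomial.eval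
      (Sum.elim (fun _ : Fin ω => (1 : ℝ)) (fun _ : Fin T => (1 : ℝ)))) h
    rw [eval_tokP, eval_tokP, tokAvg_ones ω T α hαl, tokAvg_ones ω T β hβl] at h2
    exact hlen (by exact_mod_cast h2)

/-- The finite set of nonempty lists over `Fin ω` of length at most `T`. -/
noncomputable def listS (ω T : ℕ) : Finset (List (Fin ω)) :=
  (Finset.Icc 1 T).biUnion
    (fun n => Finset.image List.ofFn (Finset.univ : Finset (Fin n → Fin ω)))

lemma mem_listS (ω T : ℕ) {α : List (Fin ω)} :
    α ∈ listS ω T ↔ α ≠ [] ∧ α.length ≤ T := by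
  simp only [listS, Finset.mem_biUnion, Finset.mem_Icc, Finset.mem_image, Finset.mem_univ,
    true_and]
  constructor
  · rintro ⟨n, ⟨h1, h2⟩, f, rfl⟩
    constructor
    · intro hc
      have : n = 0 := by simpa using congrArg List.length hc
      omega
    · simpa using h2
  · rintro ⟨h1, h2⟩
    exact ⟨α.length, ⟨List.length_pos_iff.mpr h1, h2⟩, α.get, List.ofFn_get α⟩

/-- For generic `(z, u) ∈ ℝ^ω × ℝ^T` (outside the zero set of a
nontrivial polynomial), the token-averaging map `α ↦ ∑_t u_t z_{α_t}` is
injective on nonempty sequences of length at most `T` and never takes the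
value `0`. -/
theorem stmt_15 (ω T : ℕ) :
    ∃ g : MvPolynomial (Fin ω ⊕ Fin T) ℝ, g ≠ 0 ∧
      ∀ (z : Fin ω → ℝ) (u : Fin T → ℝ),
        MvPolynomial.eval (Sum.elim z u) g ≠ 0 →
          Set.InjOn (tokAvg z u) {α : List (Fin ω) | α ≠ [] ∧ α.length ≤ T} ∧
          ∀ α : List (Fin ω), α ≠ [] → α.length ≤ T → tokAvg z u α ≠ 0 := by
  classical
  refine ⟨(∏ α ∈ listS ω T, tokP ω T α) *
    ∏ p ∈ (listS ω T ×ˢ listS ω T).filter (fun p => p.1 ≠ p.2),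
      (tokP ω T p.1 - tokP ω T p.2), ?_, ?_⟩
  · apply mul_ne_zero
    · rw [Finset.prod_ne_zero_iff]
      intro α hα
      rw [mem_listS] at hα
      exact tokP_ne_zero ω T α hα.1 hα.2
    · rw [Finset.prod_ne_zero_iff]
      intro p hp
      rw [Finset.mem_filter, Finset.mem_product] at hp
      obtain ⟨⟨hp1, hp2⟩, hp3⟩ := hp
      rw [mem_listS] at hp1 hp2
      exact sub_ne_zero.mpr (tokP_ne ω T hp1.2 hp2.2 hp3)
  · intro z u hg
    rw [map_mul, map_prod, map_prod, mul_ne_zero_iff] at hg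
    obtain ⟨h1, h2⟩ := hg
    constructor
    · intro α hα β hβ hval
      by_contra hne
      have hmem : (α, β) ∈ (listS ω T ×ˢ listS ω T).filter (fun p => p.1 ≠ p.2) := by
        rw [Finset.mem_filter, Finset.mem_product, mem_listS, mem_listS]
        exact ⟨⟨hα, hβ⟩, hne⟩
      have := Finset.prod_ne_zero_iff.mp h2 (α, β) hmem
      rw [map_sub, eval_tokP, eval_tokP] at this
      exact this (sub_eq_zero.mpr hval)
    · intro α hα1 hα2
      have := Finset.prod_ne_zero_iff.mp h1 α ((mem_listS ω T).mpr ⟨hα1, hα2⟩)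
      rwa [eval_tokP] at this
end

section
/- Let ω, m ∈ ℕ, let ψ : ℝ → ℝ be real analytic at some η ∈ ℝ and not a polynomial there, and let φ be the softmax map on ℝ^ω. Consider the token-averaged FNN hypothesis class h_θ(α) = φ(Vᵀ ψ(Wᵀ ∑_{t=1}^{|α|} u_t z_{α_t} + b)) with parameters θ = (Z, u, W, b, V) where the embedding Z = 𝟙_d zᵀ/√d and W = 𝟙_d wᵀ/√d may be rank one. Then for every distinct list α^1,...,α^m of finite nonempty sequences over [ω] and every list y_1,...,y_m of probability vectors in the relative interior of the simplex Δ^{ω-1}, there exists θ such that h_θ(α^i) = y_i for all i ∈ [m]. In other words, the next-token prediction capacity of this class is at least m. -/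
open Filter Topology Submodule FormalMultilinearSeries
open scoped ENNReal NNReal

/-- The softmax function on `ℝ^ω`. -/
noncomputable def softmax {ω : ℕ} (x : Fin ω → ℝ) : Fin ω → ℝ :=
  fun γ => Real.exp (x γ) / ∑ γ' : Fin ω, Real.exp (x γ')

/-- The token-averaged FNN model with parameters `θ = (Z, u, W, b, V)`:
`h_θ(α) = softmax (Vᵀ ψ(Wᵀ ∑_{t=1}^{|α|} u_t Z_{·,α_t} + b))`. -/
noncomputable def tokAvgFNN {d m ω : ℕ} (ψ : ℝ → ℝ)
    (Z : Fin d → Fin ω → ℝ) (u : ℕ → ℝ) (W : Fin d → Fin m → ℝ)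
    (b : Fin m → ℝ) (V : Fin m → Fin ω → ℝ) (α : List (Fin ω)) : Fin ω → ℝ :=
  softmax (fun γ : Fin ω =>
    ∑ k : Fin m, V k γ *
      ψ (∑ i : Fin d, W i k * (∑ t : Fin α.length, u t * Z i (α.get t)) + b k))


-- (P1) digits injectivity
lemma ofDigits_inj (B : ℕ) :
    ∀ (L1 L2 : List ℕ), (∀ x ∈ L1, 1 ≤ x ∧ x < B) → (∀ x ∈ L2, 1 ≤ x ∧ x < B) →
    Nat.ofDigits B L1 = Nat.ofDigits B L2 → L1 = L2 := by
  intro L1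
  induction L1 with
  | nil =>
    intro L2 _ h2 he
    cases L2 with
    | nil => rfl
    | cons d L =>
      exfalso
      rw [Nat.ofDigits_nil, Nat.ofDigits_cons] at he
      have hd := (h2 d (by simp)).1
      omega
  | cons d1 T1 ih =>
    intro L2 h1 h2 he
    cases L2 with
    | nil =>
      exfalso
      rw [Nat.ofDigits_nil, Nat.ofDigits_cons] at he
      have hd := (h1 d1 (by simp)).1
      omega
    | cons d2 T2 =>
      rw [Nat.ofDigits_cons, Nat.ofDigits_cons] at he
      have hd1 := h1 d1 (by simp)
      have hd2 := h2 d2 (by simp)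
      have hB : 0 < B := by omega
      have hdd : d1 = d2 := by
        have e1 : (d1 + B * Nat.ofDigits B T1) % B = d1 := by
          rw [Nat.add_mul_mod_self_left, Nat.mod_eq_of_lt hd1.2]
        have e2 : (d2 + B * Nat.ofDigits B T2) % B = d2 := by
          rw [Nat.add_mul_mod_self_left, Nat.mod_eq_of_lt hd2.2]
        rw [← e1, ← e2, he]
      have hT : Nat.ofDigits B T1 = Nat.ofDigits B T2 := by
        have := he
        rw [hdd] at this
        have := Nat.add_left_cancel this
        exact Nat.eq_of_mul_eq_mul_left hB this
      rw [hdd, ih T2 (fun x hx => h1 x (by simp [hx])) (fun x hx => h2 x (by simp [hx])) hT]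

-- (P2) sum to ofDigits
lemma sum_eq_ofDigits (ω : ℕ) :
    ∀ L : List (Fin ω), ∑ t : Fin L.length, ((ω:ℝ)+1)^(t:ℕ) * (((L.get t) : ℕ) + 1)
      = ((Nat.ofDigits (ω+1) (L.map fun a => a.val+1) : ℕ) : ℝ) := by
  intro L
  induction L with
  | nil => simp
  | cons a L ih =>
    rw [List.map_cons, Nat.ofDigits_cons]
    have hlen : (a :: L).length = L.length + 1 := rfl
    rw [show (∑ t : Fin (a :: L).length, ((ω:ℝ)+1)^(t:ℕ) * (((a :: L).get t : ℕ) + 1))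
        = ∑ t : Fin (L.length + 1), ((ω:ℝ)+1)^(t:ℕ) * (((a :: L).get (Fin.cast hlen.symm t) : ℕ) + 1) from
      (Fin.sum_congr' _ hlen.symm).symm]
    rw [Fin.sum_univ_succ]
    have h0 : (((a::L).get (Fin.cast hlen.symm 0)) : ℕ) = a := rfl
    have hs : ∀ x : Fin L.length, (((a::L).get (Fin.cast hlen.symm x.succ)) : ℕ) = L.get x :=
      fun _ => rfl
    push_cast
    simp only [h0, hs, Fin.val_zero, pow_zero, one_mul, Fin.val_succ]
    push_cast at ih
    rw [← ih, Finset.mul_sum]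
    congr 1
    exact Finset.sum_congr rfl fun t _ => by ring



-- (F5)
lemma vanish {ι : Type*} [Fintype ι] [DecidableEq ι] (x : ι → ℝ)
    (hx1 : ∀ i, 0 < x i) (hinj : Function.Injective x)
    (S : Set ℕ) (hS : S.Infinite) :
    ∀ (s : Finset ι) (a : ι → ℝ), (∀ n ∈ S, ∑ i ∈ s, a i * x i ^ n = 0) → ∀ i ∈ s, a i = 0 := by
  intro s
  induction s using Finset.strongInduction with
  | _ s ih =>
    intro a ha i hi
    have hsne : s.Nonempty := ⟨i, hi⟩
    obtain ⟨i0, hi0s, hi0max⟩ := s.exists_max_image x hsne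
    -- sequence of exponents
    set nth : ℕ → ℕ := Nat.nth (· ∈ S) with hnth
    have hmem : ∀ k, nth k ∈ S := fun k => Nat.nth_mem_of_infinite hS k
    have hsm : StrictMono nth := Nat.nth_strictMono hS
    -- a i0 = 0
    have hxpos := hx1 i0
    have key : ∀ n ∈ S, a i0 = -∑ j ∈ s.erase i0, a j * (x j / x i0) ^ n := by
      intro n hn
      have h1 : a i0 * x i0 ^ n + ∑ j ∈ s.erase i0, a j * x j ^ n = 0 := by
        have h1 := ha n hn
        rw [← Finset.add_sum_erase s _ hi0s] at h1
        exact h1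
      have hxn : x i0 ^ n ≠ 0 := pow_ne_zero _ (ne_of_gt hxpos)
      have e : ∀ j ∈ s.erase i0, a j * (x j / x i0) ^ n = (a j * x j ^ n) / x i0 ^ n :=
        fun j _ => by rw [div_pow]; ring
      rw [Finset.sum_congr rfl e, ← Finset.sum_div, ← neg_div, eq_div_iff hxn]
      linarith
    have hconst : ∀ k, a i0 = -∑ j ∈ s.erase i0, a j * (x j / x i0) ^ (nth k) :=
      fun k => key _ (hmem k)
    have htend : Tendsto (fun k => -∑ j ∈ s.erase i0, a j * (x j / x i0) ^ (nth k)) atTop (𝓝 0) := by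
      rw [show (0:ℝ) = -∑ j ∈ s.erase i0, (0:ℝ) by simp]
      apply Tendsto.neg
      apply tendsto_finset_sum
      intro j hj
      have hjs := Finset.mem_of_mem_erase hj
      have hjne := Finset.ne_of_mem_erase hj
      have hlt : x j / x i0 < 1 := by
        rw [div_lt_one hxpos]
        exact lt_of_le_of_ne (hi0max j hjs) (fun h => hjne (hinj h))
      have hge : 0 ≤ x j / x i0 := le_of_lt (div_pos (hx1 j) hxpos)
      have h2 : Tendsto (fun n : ℕ => (x j / x i0) ^ n) atTop (𝓝 0) :=
        tendsto_pow_atTop_nhds_zero_of_lt_one hge hlt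
      have h3 : Tendsto (fun k => (x j / x i0) ^ (nth k)) atTop (𝓝 0) :=
        h2.comp hsm.tendsto_atTop
      simpa using h3.const_mul (a j)
    have hzero : a i0 = 0 := by
      have : Tendsto (fun _ : ℕ => a i0) atTop (𝓝 0) := by
        refine Tendsto.congr (fun k => (hconst k).symm) htend
      exact tendsto_nhds_unique tendsto_const_nhds this
    rcases eq_or_ne i i0 with rfl | hne
    · exact hzero
    · have hrest : ∀ n ∈ S, ∑ j ∈ s.erase i0, a j * x j ^ n = 0 := by
        intro n hn
        have h1 := ha n hn
        rw [← Finset.add_sum_erase s _ hi0s, hzero] at h1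
        simpa using h1
      exact ih (s.erase i0) (Finset.erase_ssubset hi0s) a hrest i (Finset.mem_erase.2 ⟨hne, hi⟩)



-- (F6) points lemma
lemma points {m : ℕ} (f : Fin m → ℝ → ℝ) (S : Set ℝ)
    (h : ∀ a : Fin m → ℝ, (∀ w ∈ S, ∑ i, a i * f i w = 0) → a = 0) :
    ∃ w : Fin m → ℝ, (∀ k, w k ∈ S) ∧ IsUnit (Matrix.of fun i k => f i (w k)).det := by
  have claim : ∀ k, k ≤ m → ∃ w : Fin k → ℝ, (∀ j, w j ∈ S) ∧
      LinearIndependent ℝ (fun j : Fin k => (fun i => f i (w j) : Fin m → ℝ)) := by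
    intro k
    induction k with
    | zero => exact fun _ => ⟨Fin.elim0, fun j => j.elim0, linearIndependent_empty_type⟩
    | succ k ihk =>
      intro hkm
      obtain ⟨w, hwS, hli⟩ := ihk (Nat.le_of_succ_le hkm)
      set v : Fin k → (Fin m → ℝ) := fun j => (fun i => f i (w j)) with hv
      set P : Submodule ℝ (Fin m → ℝ) := Submodule.span ℝ (Set.range v) with hP
      have hPlt : P < ⊤ := by
        rw [lt_top_iff_ne_top]
        intro hPt
        have h1 : Module.finrank ℝ P ≤ k := by
          simpa [Set.finrank] using finrank_range_le_card (R := ℝ) v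
        have h2 : Module.finrank ℝ (Fin m → ℝ) = m := by simp
        rw [hPt] at h1
        rw [finrank_top] at h1
        omega
      have hex : ∃ w0 ∈ S, (fun i => f i w0 : Fin m → ℝ) ∉ P := by
        by_contra hcon
        push_neg at hcon
        obtain ⟨φ, hφne, hφbot⟩ :=
          Submodule.exists_dual_map_eq_bot_of_lt_top hPlt inferInstance
        have hker : ∀ z ∈ P, φ z = 0 := by
          intro z hz
          have : φ z ∈ P.map φ := Submodule.mem_map_of_mem hz
          rw [hφbot] at this
          simpa using this
        set a : Fin m → ℝ := fun i => φ (fun j => if i = j then 1 else 0) with ha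
        have h0 : a = 0 := by
          apply h
          intro w' hw'
          have hmem := hcon w' hw'
          have := hker _ hmem
          rw [LinearMap.pi_apply_eq_sum_univ φ (fun i => f i w')] at this
          rw [← this]
          exact Finset.sum_congr rfl fun i _ => by rw [ha]; simp [mul_comm]
        apply hφne
        refine LinearMap.ext fun z => ?_
        rw [LinearMap.pi_apply_eq_sum_univ φ z]
        simp only [LinearMap.zero_apply]
        have e2 : (∑ i : Fin m, z i • φ fun j => if i = j then 1 else 0)
            = ∑ i : Fin m, z i • a i := rfl
        rw [e2, h0]
        simp
      obtain ⟨w0, hw0S, hw0⟩ := hex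
      refine ⟨Fin.cons w0 w, ?_, ?_⟩
      · intro j
        refine Fin.cases ?_ ?_ j
        · simpa using hw0S
        · intro j'; simpa using hwS j'
      · have : (fun j : Fin (k+1) => (fun i => f i ((Fin.cons w0 w : Fin (k+1) → ℝ) j) : Fin m → ℝ))
            = Fin.cons (fun i => f i w0) v := by
          funext j
          refine Fin.cases ?_ ?_ j <;> simp [hv]
        rw [this, linearIndependent_fin_cons]
        exact ⟨hli, hw0⟩
  obtain ⟨w, hwS, hli⟩ := claim m le_rfl
  refine ⟨w, hwS, ?_⟩
  have hA : IsUnit ((Matrix.of fun k i => f i (w k)).det) := by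
    rw [← Matrix.isUnit_iff_isUnit_det, ← Matrix.linearIndependent_rows_iff_isUnit]
    exact hli
  have ht : (Matrix.of fun i k => f i (w k)) = Matrix.transpose (Matrix.of fun k i => f i (w k)) := by
    ext i k
    simp [Matrix.transpose_apply]
  rw [ht, Matrix.det_transpose]
  exact hA

lemma hasSum_of_ball {ψ : ℝ → ℝ} {η : ℝ} {p : FormalMultilinearSeries ℝ ℝ ℝ} {r : ℝ≥0∞}
    (hp : HasFPowerSeriesOnBall ψ p η r) {z : ℝ} (hz : (‖z‖₊ : ℝ≥0∞) < r) :
    HasSum (fun n => p.coeff n * z ^ n) (ψ (η + z)) := by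
  have h := hp.hasSum (mem_emetric_ball_zero_iff.2 hz)
  have e : (fun n => p.coeff n * z ^ n) = fun n => p n fun _ => z := by
    funext n
    rw [p.apply_eq_pow_smul_coeff, smul_eq_mul, mul_comm]
  rw [e]
  exact h

lemma coeff_le_norm (p : FormalMultilinearSeries ℝ ℝ ℝ) (n : ℕ) : |p.coeff n| ≤ ‖p n‖ := by
  have h := (p n).le_opNorm (fun _ => (1:ℝ))
  have e : (∏ _i : Fin n, ‖(1:ℝ)‖) = 1 := by simp
  rw [e, mul_one] at h
  have e2 : |p.coeff n| = ‖p n (fun _ => (1:ℝ))‖ := by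
    rw [Real.norm_eq_abs]
    rfl
  rw [e2]
  exact h

lemma infinite_nonzero_coeff {ψ : ℝ → ℝ} {η : ℝ} {p : FormalMultilinearSeries ℝ ℝ ℝ} {r : ℝ≥0∞}
    (hp : HasFPowerSeriesOnBall ψ p η r)
    (hnotpoly : ∀ q : Polynomial ℝ, ¬ ∀ᶠ x in nhds η, ψ x = Polynomial.eval x q) :
    {n : ℕ | p.coeff n ≠ 0}.Infinite := by
  by_contra hinf
  rw [Set.not_infinite] at hinf
  have hfin := hinf
  set F := hfin.toFinset with hF
  apply hnotpoly (∑ n ∈ F, Polynomial.C (p.coeff n) * (Polynomial.X - Polynomial.C η) ^ n)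
  filter_upwards [EMetric.ball_mem_nhds η hp.r_pos] with xx hxx
  have hz : (‖xx - η‖₊ : ℝ≥0∞) < r := by
    rw [EMetric.mem_ball, edist_eq_enorm_sub] at hxx
    exact hxx
  have hs := hasSum_of_ball hp hz
  rw [show η + (xx - η) = xx by ring] at hs
  have h1 : ψ xx = ∑' n, p.coeff n * (xx - η) ^ n := hs.tsum_eq.symm
  have h2 : ∑' n, p.coeff n * (xx - η) ^ n = ∑ n ∈ F, p.coeff n * (xx - η) ^ n := by
    apply tsum_eq_sum
    intro n hn
    have : p.coeff n = 0 := by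
      by_contra hc
      exact hn (by rw [hF]; exact hfin.mem_toFinset.2 hc)
    rw [this, zero_mul]
  rw [h1, h2]
  simp [Polynomial.eval_finset_sum]



lemma key {m : ℕ} (ψ : ℝ → ℝ) (η : ℝ) (hψ : AnalyticAt ℝ ψ η)
    (hnotpoly : ∀ q : Polynomial ℝ, ¬ ∀ᶠ x in nhds η, ψ x = Polynomial.eval x q)
    (x : Fin m → ℝ) (hx1 : ∀ i, 1 ≤ x i) (hinj : Function.Injective x) :
    ∃ w : Fin m → ℝ, IsUnit (Matrix.of fun i k => ψ (w k * x i + η)).det := by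
  obtain ⟨p, hpat⟩ := hψ
  obtain ⟨r, hp⟩ := hpat
  obtain ⟨r', hr'0, hr'r⟩ := ENNReal.lt_iff_exists_nnreal_btwn.1 hp.r_pos
  have hr'pos : (0:ℝ) < (r' : ℝ) := by exact_mod_cast hr'0
  set X : ℝ := 1 + ∑ i, x i with hX
  have hXpos : 0 < X := by
    have : (0:ℝ) ≤ ∑ i, x i :=
      Finset.sum_nonneg fun i _ => le_trans zero_le_one (hx1 i)
    linarith
  have hxX : ∀ i, x i ≤ X := by
    intro i
    have : x i ≤ ∑ j, x j :=
      Finset.single_le_sum (fun j _ => le_trans zero_le_one (hx1 j)) (Finset.mem_univ i)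
    linarith
  set ε : ℝ := (r' : ℝ) / X with hε
  have hεpos : 0 < ε := div_pos hr'pos hXpos
  have hεX : ε * X = (r' : ℝ) := div_mul_cancel₀ _ (ne_of_gt hXpos)
  have hmain : ∀ a : Fin m → ℝ,
      (∀ w ∈ Metric.ball (0:ℝ) ε, ∑ i, a i * ψ (w * x i + η) = 0) → a = 0 := by
    intro a ha
    set c : ℕ → ℝ := fun n => p.coeff n with hc
    set dd : ℕ → ℝ := fun n => (∑ i, a i * x i ^ n) * c n with hdd
    set g : ℝ → ℝ := fun w => ∑ i, a i * ψ (w * x i + η) with hg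
    have hsummable : Summable fun n => ‖p n‖ * (r' : ℝ) ^ n :=
      p.summable_norm_mul_pow (lt_of_lt_of_le hr'r hp.r_le)
    have hball : HasFPowerSeriesOnBall g (ofScalars ℝ dd) 0 (ENNReal.ofReal ε) := by
      refine ⟨?_, ENNReal.ofReal_pos.2 hεpos, ?_⟩
      · -- radius bound
        have he : (ENNReal.ofReal ε) = ((ε.toNNReal : ℝ≥0) : ℝ≥0∞) := rfl
        rw [he]
        apply FormalMultilinearSeries.le_radius_of_summable_norm
        have hcoe : ((ε.toNNReal : ℝ≥0) : ℝ) = ε := Real.coe_toNNReal _ (le_of_lt hεpos)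
        rw [hcoe]
        have hb : ∀ n, ‖FormalMultilinearSeries.ofScalars ℝ dd n‖ * ε ^ n
            ≤ (∑ i, |a i|) * (‖p n‖ * (r':ℝ) ^ n) := by
          intro n
          rw [FormalMultilinearSeries.ofScalars_norm]
          have h1 : ‖dd n‖ ≤ (∑ i, |a i| * x i ^ n) * |c n| := by
            rw [hdd, Real.norm_eq_abs, abs_mul]
            apply mul_le_mul_of_nonneg_right _ (abs_nonneg _)
            refine le_trans (Finset.abs_sum_le_sum_abs _ _) ?_
            apply Finset.sum_le_sum
            intro i _
            rw [abs_mul, abs_pow, abs_of_nonneg (le_trans zero_le_one (hx1 i))]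
          have hεn : (0:ℝ) ≤ ε ^ n := pow_nonneg (le_of_lt hεpos) n
          calc ‖dd n‖ * ε ^ n ≤ ((∑ i, |a i| * x i ^ n) * |c n|) * ε ^ n :=
                mul_le_mul_of_nonneg_right h1 hεn
            _ = ∑ i, |a i| * (|c n| * (x i * ε) ^ n) := by
                rw [Finset.sum_mul, Finset.sum_mul]
                refine Finset.sum_congr rfl fun i _ => ?_
                rw [mul_pow]
                ring
            _ ≤ ∑ i, |a i| * (‖p n‖ * (r':ℝ) ^ n) := by
                refine Finset.sum_le_sum fun i _ => ?_
                refine mul_le_mul_of_nonneg_left ?_ (abs_nonneg _)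
                have hxε : (0:ℝ) ≤ x i * ε :=
                  mul_nonneg (le_trans zero_le_one (hx1 i)) (le_of_lt hεpos)
                have hxε2 : x i * ε ≤ (r':ℝ) := by
                  calc x i * ε ≤ X * ε :=
                        mul_le_mul_of_nonneg_right (hxX i) (le_of_lt hεpos)
                    _ = (r':ℝ) := by rw [mul_comm]; exact hεX
                exact mul_le_mul (coeff_le_norm p n) (pow_le_pow_left₀ hxε hxε2 n)
                  (pow_nonneg hxε n) (norm_nonneg _)
            _ = (∑ i, |a i|) * (‖p n‖ * (r':ℝ) ^ n) := (Finset.sum_mul _ _ _).symm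
        refine Summable.of_nonneg_of_le (fun n => ?_) hb (hsummable.mul_left _)
        exact mul_nonneg (norm_nonneg _) (pow_nonneg (le_of_lt hεpos) n)
      · -- hasSum
        intro zz hzz
        have hzε : ‖zz‖ < ε := by
          have h := mem_emetric_ball_zero_iff.1 hzz
          rw [← ofReal_norm, ENNReal.ofReal_lt_ofReal_iff hεpos] at h
          exact h
        have hsum_i : ∀ i : Fin m,
            HasSum (fun n => a i * (c n * (zz * x i) ^ n)) (a i * ψ (zz * x i + η)) := by
          intro i
          have hzr : ‖zz * x i‖ < (r':ℝ) := by
            rw [norm_mul]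
            calc ‖zz‖ * ‖x i‖ ≤ ‖zz‖ * X := by
                  refine mul_le_mul_of_nonneg_left ?_ (norm_nonneg _)
                  rw [Real.norm_eq_abs, abs_of_nonneg (le_trans zero_le_one (hx1 i))]
                  exact hxX i
              _ < ε * X := by
                  exact mul_lt_mul_of_pos_right hzε hXpos
              _ = (r':ℝ) := hεX
          have hzi : (‖zz * x i‖₊ : ℝ≥0∞) < r := by
            refine lt_of_lt_of_le ?_ (le_of_lt hr'r)
            rw [← enorm_eq_nnnorm, ← ofReal_norm]
            rw [show ((r' : ℝ≥0) : ℝ≥0∞) = ENNReal.ofReal (r':ℝ) from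
              (ENNReal.ofReal_coe_nnreal).symm]
            exact (ENNReal.ofReal_lt_ofReal_iff hr'pos).2 hzr
          have h := (hasSum_of_ball hp hzi).mul_left (a i)
          rw [show η + zz * x i = zz * x i + η by ring] at h
          exact h
        have htot := hasSum_sum (fun i (_ : i ∈ Finset.univ) => hsum_i i)
        have e1 : (fun n => ∑ i, a i * (c n * (zz * x i) ^ n))
            = fun n => FormalMultilinearSeries.ofScalars ℝ dd n fun _ => zz := by
          funext n
          rw [FormalMultilinearSeries.ofScalars_apply_eq, smul_eq_mul]
          calc ∑ i, a i * (c n * (zz * x i) ^ n)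
              = ∑ i, (a i * x i ^ n) * (c n * zz ^ n) := by
                refine Finset.sum_congr rfl fun i _ => ?_
                rw [mul_pow]
                ring
            _ = dd n * zz ^ n := by
                simp only [hdd]
                rw [Finset.sum_mul, Finset.sum_mul]
                exact Finset.sum_congr rfl fun i _ => by ring
        rw [e1] at htot
        have e2 : g (0 + zz) = ∑ i, a i * ψ (zz * x i + η) := by
          rw [zero_add, hg]
        rw [e2]
        exact htot
    have hg0 : g =ᶠ[𝓝 (0:ℝ)] 0 := by
      filter_upwards [Metric.ball_mem_nhds (0:ℝ) hεpos] with w hw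
      exact ha w hw
    have heq : FormalMultilinearSeries.ofScalars ℝ dd
        = constFormalMultilinearSeries ℝ ℝ (0:ℝ) :=
      hball.hasFPowerSeriesAt.eq_formalMultilinearSeries_of_eventually
        hasFPowerSeriesAt_const hg0
    rw [constFormalMultilinearSeries_zero] at heq
    have hdd0 : dd = 0 := (FormalMultilinearSeries.ofScalars_series_eq_zero (E := ℝ) (𝕜 := ℝ)).1 heq
    have hvan : ∀ n ∈ {n : ℕ | c n ≠ 0}, ∑ i ∈ Finset.univ, a i * x i ^ n = 0 := by
      intro n hn
      have h0 : dd n = 0 := by rw [hdd0]; rfl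
      rw [hdd] at h0
      rcases mul_eq_zero.1 h0 with h | h
      · exact h
      · exact absurd h hn
    have hKinf : {n : ℕ | c n ≠ 0}.Infinite := infinite_nonzero_coeff hp hnotpoly
    funext i
    exact vanish x (fun j => lt_of_lt_of_le one_pos (hx1 j)) hinj _ hKinf Finset.univ a hvan
      i (Finset.mem_univ i)
  obtain ⟨w, _, hdet⟩ := points (fun i w => ψ (w * x i + η)) (Metric.ball 0 ε) hmain
  exact ⟨w, hdet⟩

/-- If `ψ` is real analytic at some `η` and not a polynomial there,
then the token-averaged FNN class with hidden width `m` has next-token prediction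
capacity at least `m`: any `m` distinct nonempty contexts with arbitrary targets
in the relative interior of the simplex can be interpolated. -/
theorem stmt_16 {d m ω : ℕ} (hd : 0 < d) (hω : 0 < ω)
    (ψ : ℝ → ℝ) (η : ℝ) (hψ : AnalyticAt ℝ ψ η)
    (hnotpoly : ∀ p : Polynomial ℝ, ¬ ∀ᶠ x in nhds η, ψ x = Polynomial.eval x p)
    (α : Fin m → List (Fin ω)) (hα : Function.Injective α)
    (hαne : ∀ i, α i ≠ [])
    (y : Fin m → Fin ω → ℝ)
    (hy : ∀ i, (∀ γ, 0 < y i γ) ∧ ∑ γ : Fin ω, y i γ = 1) :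
    ∃ (Z : Fin d → Fin ω → ℝ) (u : ℕ → ℝ) (W : Fin d → Fin m → ℝ)
      (b : Fin m → ℝ) (V : Fin m → Fin ω → ℝ),
      ∀ i : Fin m, tokAvgFNN ψ Z u W b V (α i) = y i := by
  classical
  set u : ℕ → ℝ := fun t => ((ω:ℝ)+1)^t with hu
  set Z : Fin d → Fin ω → ℝ := fun _ γ => ((γ : ℕ) : ℝ) + 1 with hZ
  set x : Fin m → ℝ := fun i =>
    ∑ t : Fin (α i).length, u t * ((((α i).get t) : ℕ) + 1) with hx
  set N : Fin m → ℕ := fun i => Nat.ofDigits (ω+1) ((α i).map fun a => a.val+1) with hN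
  have hxN : ∀ i, x i = (N i : ℝ) := fun i => sum_eq_ofDigits ω (α i)
  have hdig : ∀ i, ∀ q ∈ (α i).map (fun a => a.val+1), 1 ≤ q ∧ q < ω + 1 := by
    intro i q hq
    rw [List.mem_map] at hq
    obtain ⟨a, _, rfl⟩ := hq
    exact ⟨Nat.le_add_left _ _, by omega⟩
  have hx1 : ∀ i, 1 ≤ x i := by
    intro i
    rw [hxN i]
    have h1 : 1 ≤ N i := by
      simp only [hN]
      cases hαi : α i with
      | nil => exact absurd hαi (hαne i)
      | cons a L =>
        rw [List.map_cons, Nat.ofDigits_cons]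
        omega
    exact_mod_cast h1
  have hinj : Function.Injective x := by
    intro i j hij
    rw [hxN i, hxN j] at hij
    have hNij : N i = N j := by exact_mod_cast hij
    have hlist := ofDigits_inj (ω+1) _ _ (hdig i) (hdig j) hNij
    have hmapinj : Function.Injective (fun a : Fin ω => a.val + 1) := by
      intro a b hab
      simp only at hab
      exact Fin.val_injective (by omega)
    have := List.map_injective_iff.2 hmapinj hlist
    exact hα this
  obtain ⟨w, hdet⟩ := key ψ η hψ hnotpoly x hx1 hinj
  set M : Matrix (Fin m) (Fin m) ℝ := Matrix.of fun i k => ψ (w k * x i + η) with hM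
  set Y : Matrix (Fin m) (Fin ω) ℝ := Matrix.of fun i γ => Real.log (y i γ) with hY
  set V' : Matrix (Fin m) (Fin ω) ℝ := M⁻¹ * Y with hV'
  set i0d : Fin d := ⟨0, hd⟩ with hi0d
  refine ⟨Z, u, fun i' k => if i' = i0d then w k else 0, fun _ => η,
    fun k γ => V' k γ, ?_⟩
  intro i
  have hinner : ∀ k : Fin m,
      (∑ i' : Fin d, (if i' = i0d then w k else 0) *
        (∑ t : Fin (α i).length, u t * Z i' ((α i).get t)) + η) = w k * x i + η := by
    intro k
    congr 1
    have e1 : ∀ i' : Fin d,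
        (∑ t : Fin (α i).length, u t * Z i' ((α i).get t)) = x i := by
      intro i'
      rw [hx]
    calc ∑ i' : Fin d, (if i' = i0d then w k else 0) *
          (∑ t : Fin (α i).length, u t * Z i' ((α i).get t))
        = ∑ i' : Fin d, (if i' = i0d then w k * x i else 0) := by
          refine Finset.sum_congr rfl fun i' _ => ?_
          rw [e1 i', ite_mul, zero_mul]
      _ = w k * x i := by
          rw [Finset.sum_ite_eq' Finset.univ i0d fun _ => w k * x i]
          simp
  have hMV : M * V' = Y := M.mul_nonsing_inv_cancel_left Y hdet
  have hpre : (fun γ : Fin ω => ∑ k : Fin m, V' k γ *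
      ψ (∑ i' : Fin d, (if i' = i0d then w k else 0) *
        (∑ t : Fin (α i).length, u t * Z i' ((α i).get t)) + η))
      = fun γ => Real.log (y i γ) := by
    funext γ
    have e2 : ∀ k : Fin m, V' k γ *
        ψ (∑ i' : Fin d, (if i' = i0d then w k else 0) *
          (∑ t : Fin (α i).length, u t * Z i' ((α i).get t)) + η)
        = M i k * V' k γ := by
      intro k
      rw [hinner k, mul_comm]
      rfl
    rw [Finset.sum_congr rfl fun k _ => e2 k, ← Matrix.mul_apply, hMV]
    rfl
  show softmax _ = y i
  rw [hpre]
  funext γ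
  rw [softmax]
  have hexp : ∀ γ' : Fin ω, Real.exp (Real.log (y i γ')) = y i γ' :=
    fun γ' => Real.exp_log ((hy i).1 γ')
  rw [hexp γ, Finset.sum_congr rfl fun γ' _ => hexp γ', (hy i).2, div_one]
end

section
/- Let ω ≥ 2, k, n ∈ ℕ with k < n(ω−1). Suppose for each θ ∈ ℝ^k and each finite sequence α over [ω] we have h_θ(α) ∈ ri Δ^{ω-1}, and the map θ ↦ h_θ(α) is continuously differentiable for every α. Then for any distinct sequences α^1,...,α^n, the map F : ℝ^k → (ri Δ^{ω-1})^n, θ ↦ (h_θ(α^1),...,h_θ(α^n)), is not surjective; consequently the next-token prediction capacity of {h_θ} is at most k/(ω−1). -/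
/-- (Sard upper bound on next-token prediction capacity.)
Let `ω ≥ 2` and `k < n(ω−1)`. If each `h_θ(α)` lies in the relative interior of
the simplex `Δ^{ω-1}` and `θ ↦ h_θ(α)` is continuously differentiable for every
context `α`, then for any `n` distinct contexts the joint evaluation map is not
surjective onto `(ri Δ^{ω-1})^n`: some list of targets in the relative interior
of the simplex cannot be interpolated. -/
theorem stmt_18 {ω k n : ℕ} (hω : 2 ≤ ω) (hkn : k < n * (ω - 1))
    (h : (Fin k → ℝ) → List (Fin ω) → Fin ω → ℝ)
    (hsimplex : ∀ (θ : Fin k → ℝ) (α : List (Fin ω)),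
      (∀ γ, 0 < h θ α γ) ∧ ∑ γ : Fin ω, h θ α γ = 1)
    (hC1 : ∀ α : List (Fin ω), ContDiff ℝ 1 (fun θ : Fin k → ℝ => h θ α))
    (α : Fin n → List (Fin ω)) (hα : Function.Injective α) :
    ∃ y : Fin n → Fin ω → ℝ,
      (∀ i, (∀ γ, 0 < y i γ) ∧ ∑ γ : Fin ω, y i γ = 1) ∧
      ∀ θ : Fin k → ℝ, ∃ i : Fin n, h θ (α i) ≠ y i := by
  obtain ⟨m, rfl⟩ : ∃ m, ω = m + 1 := ⟨ω - 1, by omega⟩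
  have hm : (m + 1) - 1 = m := rfl
  rw [hm] at hkn
  -- The truncated joint evaluation map into ℝ^{n·m}
  set F : (Fin k → ℝ) → (Fin n → Fin m → ℝ) :=
    fun θ i γ => h θ (α i) γ.castSucc with hF
  have hFc1 : ContDiff ℝ 1 F := by
    refine contDiff_pi.2 fun i => contDiff_pi.2 fun γ => ?_
    exact contDiff_pi.1 (hC1 (α i)) γ.castSucc
  have hdim : Module.finrank ℝ (Fin k → ℝ) < Module.finrank ℝ (Fin n → Fin m → ℝ) := by
    have h1 : Module.finrank ℝ (Fin n → Fin m → ℝ) = n * m := by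
      rw [Module.finrank_pi_fintype]
      simp [Module.finrank_fintype_fun_eq_card, Finset.sum_const, mul_comm]
    rw [h1, Module.finrank_fintype_fun_eq_card, Fintype.card_fin]
    exact hkn
  have hdense : Dense (Set.range F)ᶜ :=
    hFc1.dense_compl_range_of_finrank_lt_finrank hdim
  -- An open set of admissible truncated targets
  set U : Set (Fin n → Fin m → ℝ) :=
    ⋂ i : Fin n, ((⋂ γ : Fin m, (fun y' : Fin n → Fin m → ℝ => y' i γ) ⁻¹' Set.Ioi 0) ∩
      ((fun y' : Fin n → Fin m → ℝ => ∑ γ : Fin m, y' i γ) ⁻¹' Set.Iio 1)) with hU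
  have hUopen : IsOpen U := by
    refine isOpen_iInter_of_finite fun i => IsOpen.inter ?_ ?_
    · exact isOpen_iInter_of_finite fun γ =>
        (isOpen_Ioi).preimage ((continuous_apply γ).comp (continuous_apply i))
    · exact (isOpen_Iio).preimage (by
        exact continuous_finset_sum _ fun γ _ => (continuous_apply γ).comp (continuous_apply i))
  have hUne : U.Nonempty := by
    refine ⟨fun _ _ => (1 : ℝ) / (m + 1), ?_⟩
    simp only [hU, Set.mem_iInter, Set.mem_inter_iff, Set.mem_preimage, Set.mem_Ioi, Set.mem_Iio]
    have hpos : (0 : ℝ) < (m : ℝ) + 1 := by positivity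
    refine fun i => ⟨fun γ => by positivity, ?_⟩
    rw [Finset.sum_const, Finset.card_univ, Fintype.card_fin, nsmul_eq_mul, mul_one_div,
      div_lt_one hpos]
    linarith
  obtain ⟨y', hy'F, hy'U⟩ := hdense.exists_mem_open hUopen hUne
  rw [hU] at hy'U
  simp only [Set.mem_iInter, Set.mem_inter_iff, Set.mem_preimage, Set.mem_Ioi,
    Set.mem_Iio] at hy'U
  refine ⟨fun i => Fin.snoc (y' i) (1 - ∑ γ : Fin m, y' i γ), fun i => ⟨?_, ?_⟩, ?_⟩
  · intro γ
    refine Fin.lastCases ?_ (fun j => ?_) γ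
    · simp only [Fin.snoc_last]; linarith [(hy'U i).2]
    · simp only [Fin.snoc_castSucc]; exact (hy'U i).1 j
  · simp only [Fin.sum_univ_castSucc, Fin.snoc_castSucc, Fin.snoc_last]
    ring
  · intro θ
    by_contra hc
    push_neg at hc
    apply hy'F
    refine ⟨θ, ?_⟩
    funext i γ
    simp only [hF, hc i, Fin.snoc_castSucc]
end
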